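/- Let X be a geometric random variable with parameter p ∈ [0,1) and mean μ = p/(1-p) > 0. Then for any real 0 ≤ λ ≤ log(1 + 1/(2μ)), the centered moment generating function satisfies E[e^{λ(X - μ)}] ≤ exp(2σ^2 e^λ λ^2), where σ^2 = μ(1+μ) is the variance of X. -/

import Mathlib

/-!
Summing the geometric series gives `E[e^{λ(X-μ)}] = e^{-λμ} / (1 - x)` with `x = μ(e^λ - 1)`,
and the range of `λ` is exactly the condition `x ≤ 1/2`. The bound then follows from three
elementary inequalities: `-log (1 - x) ≤ x + 2x²` for `x ≤ 1/2`,
`x - λμ = μ(e^λ - 1 - λ) ≤ μλ²e^λ`, and `x² ≤ μ²λ²e^{2λ} ≤ (μ + 1/2)μλ²e^λ`,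
the last one using `μe^λ = μ + x ≤ μ + 1/2` again.
-/

open Real

lemma exp_sub_one_le_mul_exp (t : ℝ) : exp t - 1 ≤ t * exp t := by
  have h := mul_le_mul_of_nonneg_right (add_one_le_exp (-t)) (exp_pos t).le
  rw [← exp_add, neg_add_cancel, exp_zero] at h
  linarith

lemma exp_sub_one_sub_le_sq_mul_exp {t : ℝ} (ht : 0 ≤ t) : exp t - 1 - t ≤ t ^ 2 * exp t := by
  have h : exp t - 1 - t ≤ t * (exp t - 1) := by linarith [exp_sub_one_le_mul_exp t]
  linarith [mul_le_mul_of_nonneg_left (exp_sub_one_le_mul_exp t) ht]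

lemma neg_log_one_sub_le {x : ℝ} (hx : x ≤ 1 / 2) :
    -log (1 - x) ≤ x + 2 * x ^ 2 := by
  have hpos : 0 < 1 - x := by linarith
  have hlog := one_sub_inv_le_log_of_pos hpos
  have hinv : (1 - x)⁻¹ ≤ 1 + x + 2 * x ^ 2 := by
    rw [inv_le_iff_one_le_mul₀ hpos]
    nlinarith [mul_nonneg (sq_nonneg x) (by linarith : 0 ≤ 1 - 2 * x)]
  linarith

lemma neg_mul_sub_log_one_sub_le {μ l : ℝ} (hμ : 0 ≤ μ) (hl : 0 ≤ l)
    (hx : μ * (exp l - 1) ≤ 1 / 2) :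
    -(l * μ) - log (1 - μ * (exp l - 1)) ≤ 2 * (μ * (1 + μ)) * exp l * l ^ 2 := by
  set x := μ * (exp l - 1)
  have hx0 : 0 ≤ x := mul_nonneg hμ (by linarith [one_le_exp hl])
  have hlinear : x - l * μ ≤ μ * (l ^ 2 * exp l) := by
    have := mul_le_mul_of_nonneg_left (exp_sub_one_sub_le_sq_mul_exp hl) hμ
    linarith
  have hquadratic : x ^ 2 ≤ (μ + 1 / 2) * μ * (l ^ 2 * exp l) := by
    have hxle : x ≤ μ * (l * exp l) := mul_le_mul_of_nonneg_left (exp_sub_one_le_mul_exp l) hμ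
    have hμexp : μ * exp l ≤ μ + 1 / 2 := by linarith
    calc x ^ 2 ≤ (μ * (l * exp l)) ^ 2 := pow_le_pow_left₀ hx0 hxle 2
      _ = (μ * exp l) * μ * (l ^ 2 * exp l) := by ring
      _ ≤ (μ + 1 / 2) * μ * (l ^ 2 * exp l) := by gcongr
  linarith [neg_log_one_sub_le hx]

lemma mul_exp_sub_one_le_half {μ l : ℝ} (hμ : 0 ≤ μ) (hl : l ≤ log (1 + 1 / (2 * μ))) :
    μ * (exp l - 1) ≤ 1 / 2 := by
  have hexp : exp l - 1 ≤ 1 / (2 * μ) := by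
    have := (le_log_iff_exp_le (by positivity)).mp hl
    linarith
  calc μ * (exp l - 1) ≤ μ * (1 / (2 * μ)) := mul_le_mul_of_nonneg_left hexp hμ
    _ = (2 * μ) * (2 * μ)⁻¹ / 2 := by ring
    -- also covers `μ = 0`, where `1 / (2 * μ) = 0`
    _ ≤ 1 / 2 := by gcongr; exact mul_inv_le_one

lemma tsum_exp_mul_sub_mul_geometric {p : ℝ} (hp0 : 0 ≤ p) (l m : ℝ) (hpl : p * exp l < 1) :
    ∑' k : ℕ, exp (l * ((k : ℝ) - m)) * (p ^ k * (1 - p)) =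
      exp (-(l * m)) * ((1 - p) / (1 - p * exp l)) := by
  have hterm (k : ℕ) : exp (l * ((k : ℝ) - m)) * (p ^ k * (1 - p)) =
      exp (-(l * m)) * (1 - p) * (p * exp l) ^ k := by
    rw [mul_pow, ← exp_nat_mul, show l * ((k : ℝ) - m) = k * l + -(l * m) by ring, exp_add]
    ring
  simp_rw [hterm]
  rw [tsum_mul_left, tsum_geometric_of_lt_one (by positivity) hpl]
  ring

lemma one_sub_mul_div_one_sub {p : ℝ} (hp : p < 1) (y : ℝ) :
    (1 - p * y) / (1 - p) = 1 - p / (1 - p) * (y - 1) := by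
  have : 1 - p ≠ 0 := by linarith
  field_simp
  ring

theorem geometric_centered_mgf_bound_general (p : ℝ) (hp0 : 0 ≤ p) (hp1 : p < 1)
    (l : ℝ) (hl0 : 0 ≤ l)
    (hl1 : l ≤ Real.log (1 + 1 / (2 * (p / (1 - p))))) :
    (∑' k : ℕ, Real.exp (l * ((k : ℝ) - p / (1 - p))) * (p ^ k * (1 - p))) ≤
      Real.exp (2 * ((p / (1 - p)) * (1 + p / (1 - p))) * Real.exp l * l ^ 2) := by
  set μ := p / (1 - p)
  have hμ : 0 ≤ μ := div_nonneg hp0 (by linarith)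
  have hx := mul_exp_sub_one_le_half hμ hl1
  have hratio := one_sub_mul_div_one_sub hp1 (exp l)
  have hpos : 0 < 1 - μ * (exp l - 1) := by linarith
  have hpl : p * exp l < 1 := by
    have := (div_pos_iff_of_pos_right (by linarith)).mp (hratio ▸ hpos)
    linarith
  calc ∑' k : ℕ, exp (l * ((k : ℝ) - μ)) * (p ^ k * (1 - p))
      = exp (-(l * μ)) * (1 - μ * (exp l - 1))⁻¹ := by
        rw [tsum_exp_mul_sub_mul_geometric hp0 l μ hpl, ← hratio, inv_div]
    _ = exp (-(l * μ) - log (1 - μ * (exp l - 1))) := by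
        rw [exp_sub, exp_log hpos, div_eq_mul_inv]
    _ ≤ exp (2 * (μ * (1 + μ)) * exp l * l ^ 2) :=
        exp_le_exp.mpr (neg_mul_sub_log_one_sub_le hμ hl0 hx)

/-- Centered MGF bound for a geometric random variable: if `X` is geometric with
parameter `p ∈ [0,1)`, mean `μ = p/(1-p) > 0` and variance `σ² = μ(1+μ)`, then for
`0 ≤ λ ≤ log(1 + 1/(2μ))` one has `E[e^{λ(X-μ)}] ≤ exp(2σ² e^λ λ²)`. -/
theorem geometric_centered_mgf_bound (p : ℝ) (hp0 : 0 ≤ p) (hp1 : p < 1)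
    (hμ : 0 < p / (1 - p)) (l : ℝ) (hl0 : 0 ≤ l)
    (hl1 : l ≤ Real.log (1 + 1 / (2 * (p / (1 - p))))) :
    (∑' k : ℕ, Real.exp (l * ((k : ℝ) - p / (1 - p))) * (p ^ k * (1 - p))) ≤
      Real.exp (2 * ((p / (1 - p)) * (1 + p / (1 - p))) * Real.exp l * l ^ 2) :=
  geometric_centered_mgf_bound_general p hp0 hp1 l hl0 hl1
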